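/- Let φ = ⋁_{i=1}^m ⋀_{j=1}^{n_i} l^i_j be a classical propositional formula in disjunctive normal form (each l^i_j a literal). Then the PIT ζ_φ = ⊙_{i=1}^m (Pr(⋀_{j=1}^{n_i} l^i_j) ≤ 0̄) is FP-satisfiable if and only if φ is not CPL-valid. -/

import Mathlib

open scoped Classical

/-- Classical propositional formulas (the language `L_CPL`), built from
propositional variables (indexed by `ℕ`) using ¬, ∧, ∨. -/
inductive CPL where
  | var : ℕ → CPL
  | neg : CPL → CPL
  | and : CPL → CPL → CPL
  | or : CPL → CPL → CPL
deriving DecidableEq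

namespace CPL

/-- The set of propositional variables occurring in a formula. -/
def vars : CPL → Finset ℕ
  | var p => {p}
  | neg φ => vars φ
  | and φ χ => vars φ ∪ vars χ
  | or φ χ => vars φ ∪ vars χ

/-- Classical evaluation of a formula under a Boolean valuation. -/
def eval (v : ℕ → Bool) : CPL → Bool
  | var p => v p
  | neg φ => !eval v φ
  | and φ χ => eval v φ && eval v χ
  | or φ χ => eval v φ || eval v χ

/-- Evaluation of a formula at a state given as a set of variables:
the variables in `X` are true, all others false. -/
def evalSet (X : Finset ℕ) (φ : CPL) : Bool := eval (fun p => decide (p ∈ X)) φ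

/-- CPL-satisfiability. -/
def Satisfiable (φ : CPL) : Prop := ∃ v, eval v φ = true

/-- CPL-validity. -/
def Valid (φ : CPL) : Prop := ∀ v, eval v φ = true

/-- Classical entailment `φ ⊨_CPL χ`. -/
def Entails (φ χ : CPL) : Prop := ∀ v, eval v φ = true → eval v χ = true

/-- A literal: a variable or a negated variable. -/
def IsLiteral (φ : CPL) : Prop := (∃ p, φ = var p) ∨ ∃ p, φ = neg (var p)

/-- An `L_CPL`-term: a conjunction of literals. -/
inductive IsTerm : CPL → Prop
  | lit {φ} : IsLiteral φ → IsTerm φ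
  | conj {φ χ} : IsTerm φ → IsTerm χ → IsTerm (and φ χ)

/-- A conjunction of propositional variables. -/
inductive IsConjVars : CPL → Prop
  | var (p : ℕ) : IsConjVars (var p)
  | conj {φ χ} : IsConjVars φ → IsConjVars χ → IsConjVars (and φ χ)

/-- A disjunction of propositional variables. -/
inductive IsDisjVars : CPL → Prop
  | var (p : ℕ) : IsDisjVars (var p)
  | disj {φ χ} : IsDisjVars φ → IsDisjVars χ → IsDisjVars (or φ χ)

/-- Variables occurring as positive literals (in a term). -/
def posVars : CPL → Finset ℕ
  | var p => {p}
  | neg _ => ∅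
  | and φ χ => posVars φ ∪ posVars χ
  | or _ _ => ∅

/-- Variables occurring as negated literals (in a term). -/
def negVars : CPL → Finset ℕ
  | var _ => ∅
  | neg (var p) => {p}
  | neg _ => ∅
  | and φ χ => negVars φ ∪ negVars χ
  | or _ _ => ∅

/-- The literals occurring in a term. -/
def lits (φ : CPL) : Finset CPL :=
  (posVars φ).image var ∪ (negVars φ).image (fun p => neg (var p))

end CPL

/-- A state (possible world) over a finite set `V` of variables: a subset of `V`. -/
abbrev World (V : Finset ℕ) := {X : Finset ℕ // X ⊆ V}

/-- A probabilistic model for `V`: a finitely additive probability measure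
`μ : 2^(2^V) → [0,1]`. -/
structure ProbModel (V : Finset ℕ) where
  μ : Set (World V) → ℝ
  nonneg : ∀ A, 0 ≤ μ A
  le_one : ∀ A, μ A ≤ 1
  m_univ : μ Set.univ = 1
  m_empty : μ ∅ = 0
  m_add : ∀ A B : Set (World V), Disjoint A B → μ (A ∪ B) = μ A + μ B

/-- The truth set `‖φ‖_M` of a classical formula in a probabilistic model for `V`. -/
def truthSet (V : Finset ℕ) (φ : CPL) : Set (World V) :=
  {w | CPL.evalSet w.1 φ = true}

/-- Comparison symbols ◇ ∈ {≤, <, >, ≥}. -/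
inductive Ineq where
  | le | lt | gt | ge
deriving DecidableEq

/-- The relation denoted by a comparison symbol. -/
def Ineq.holds : Ineq → ℝ → ℝ → Prop
  | le, x, c => x ≤ c
  | lt, x, c => x < c
  | gt, x, c => x > c
  | ge, x, c => x ≥ c

/-- Formulas of the probabilistic language `L^Q_Pr`, built from probabilistic atoms
`Pr(φ)` and `Pr(φ)◇c̄` using ¬, △, ⊙, ⊕, →. -/
inductive FP where
  | prob : CPL → FP
  | probIneq : CPL → Ineq → ℚ → FP
  | neg : FP → FP
  | delta : FP → FP
  | conj : FP → FP → FP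
  | disj : FP → FP → FP
  | impl : FP → FP → FP
deriving DecidableEq

namespace FP

/-- Well-formedness: all rational constants lie in `[0,1] ∩ ℚ`. -/
def WF : FP → Prop
  | prob _ => True
  | probIneq _ _ c => 0 ≤ c ∧ c ≤ 1
  | neg α => WF α
  | delta α => WF α
  | conj α β => WF α ∧ WF β
  | disj α β => WF α ∧ WF β
  | impl α β => WF α ∧ WF β

/-- The variables of an `L^Q_Pr`-formula. -/
def vars : FP → Finset ℕ
  | prob φ => φ.vars
  | probIneq φ _ _ => φ.vars
  | neg α => vars α
  | delta α => vars α
  | conj α β => vars α ∪ vars β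
  | disj α β => vars α ∪ vars β
  | impl α β => vars α ∪ vars β

/-- The events `E(α)`: the classical formulas occurring in probabilistic atoms of `α`. -/
def events : FP → Finset CPL
  | prob φ => {φ}
  | probIneq φ _ _ => {φ}
  | neg α => events α
  | delta α => events α
  | conj α β => events α ∪ events β
  | disj α β => events α ∪ events β
  | impl α β => events α ∪ events β

/-- The FP-interpretation `I_M` induced by a probabilistic model `M`. -/
noncomputable def interp {V : Finset ℕ} (M : ProbModel V) : FP → ℝ
  | prob φ => M.μ (truthSet V φ)
  | probIneq φ d c => if d.holds (M.μ (truthSet V φ)) (c : ℝ) then 1 else 0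
  | neg α => 1 - interp M α
  | delta α => if interp M α = 1 then 1 else 0
  | conj α β => max 0 (interp M α + interp M β - 1)
  | disj α β => min 1 (interp M α + interp M β)
  | impl α β => min 1 (1 - interp M α + interp M β)

/-- `α` is FP-satisfiable: `I_M(α) = 1` in some probabilistic model for `Var(α)`. -/
def Satisfiable (α : FP) : Prop := ∃ M : ProbModel α.vars, interp M α = 1

/-- `α` is FP-valid: `I_M(α) = 1` in every probabilistic model for `Var(α)`. -/
def Valid (α : FP) : Prop := ∀ M : ProbModel α.vars, interp M α = 1

/-- `α ⊨_FP β`: `I_M(β) = 1` in every probabilistic model for the variables of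
`{α, β}` with `I_M(α) = 1`. -/
def Entails1 (α β : FP) : Prop :=
  ∀ M : ProbModel (α.vars ∪ β.vars), interp M α = 1 → interp M β = 1

/-- The variables of a finite set of `L^Q_Pr`-formulas. -/
def varsSet (Γ : Finset FP) : Finset ℕ := Γ.sup vars

/-- A finite set `Γ` is FP-satisfiable (`Γ ⊭_FP ⊥`): some probabilistic model for
the variables of `Γ` makes every member of `Γ` equal to `1`. -/
def SetSatisfiable (Γ : Finset FP) : Prop :=
  ∃ M : ProbModel (varsSet Γ), ∀ γ ∈ Γ, interp M γ = 1

/-- `Γ ⊨_FP δ`: every probabilistic model for the variables of `Γ ∪ {δ}` satisfying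
all of `Γ` satisfies `δ`. -/
def EntailsFin (Γ : Finset FP) (δ : FP) : Prop :=
  ∀ M : ProbModel (varsSet Γ ∪ δ.vars), (∀ γ ∈ Γ, interp M γ = 1) → interp M δ = 1

/-- `Γ ⊨^cons_FP δ`: `Γ ⊨_FP δ` and `Γ ⊭_FP ⊥`. -/
def ConsEntails (Γ : Finset FP) (δ : FP) : Prop :=
  EntailsFin Γ δ ∧ SetSatisfiable Γ

/-- The set of permitted values `V_Pr(Pr(φ)◇c̄)`. -/
def permittedValues (φ : CPL) (d : Ineq) (c : ℚ) : Set ℝ :=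
  {x | ∃ (V : Finset ℕ) (M : ProbModel V), φ.vars ⊆ V ∧
      interp M (probIneq φ d c) = 1 ∧ M.μ (truthSet V φ) = x}

end FP

/-- Formulas of the Łukasiewicz language `L^Q_Ł`, built from propositional variables
and truth-constant literals `p◇c̄` using ¬, △, ⊙, ⊕, →. -/
inductive Luk where
  | var : ℕ → Luk
  | ineq : ℕ → Ineq → ℚ → Luk
  | neg : Luk → Luk
  | delta : Luk → Luk
  | conj : Luk → Luk → Luk
  | disj : Luk → Luk → Luk
  | impl : Luk → Luk → Luk
deriving DecidableEq

/-- An Ł-valuation: a function `Var → [0,1]`. -/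
structure LukVal where
  v : ℕ → ℝ
  mem : ∀ p, v p ∈ Set.Icc (0 : ℝ) 1

/-- Extension of an Ł-valuation to all `L^Q_Ł`-formulas. -/
noncomputable def LukVal.eval (val : LukVal) : Luk → ℝ
  | .var p => val.v p
  | .ineq p d c => if d.holds (val.v p) (c : ℝ) then 1 else 0
  | .neg φ => 1 - val.eval φ
  | .delta φ => if val.eval φ = 1 then 1 else 0
  | .conj φ χ => max 0 (val.eval φ + val.eval χ - 1)
  | .disj φ χ => min 1 (val.eval φ + val.eval χ)
  | .impl φ χ => min 1 (1 - val.eval φ + val.eval χ)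

namespace Luk

/-- Well-formedness: all rational constants lie in `[0,1] ∩ ℚ`. -/
def WF : Luk → Prop
  | var _ => True
  | ineq _ _ c => 0 ≤ c ∧ c ≤ 1
  | neg φ => WF φ
  | delta φ => WF φ
  | conj φ χ => WF φ ∧ WF χ
  | disj φ χ => WF φ ∧ WF χ
  | impl φ χ => WF φ ∧ WF χ

/-- `Φ ⊨_Ł χ` for a finite set `Φ`. -/
def EntailsFin (Φ : Finset Luk) (χ : Luk) : Prop :=
  ∀ val : LukVal, (∀ φ ∈ Φ, val.eval φ = 1) → val.eval χ = 1

/-- `φ` is Ł-valid. -/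
def ValidL (φ : Luk) : Prop := ∀ val : LukVal, val.eval φ = 1

/-- A set of `L^Q_Ł`-formulas is Ł-satisfiable. -/
def SatisfiableSet (S : Set Luk) : Prop := ∃ val : LukVal, ∀ φ ∈ S, val.eval φ = 1

/-- The probabilistic counterpart `φ^Pr` of a Łukasiewicz formula. -/
def toFP : Luk → FP
  | var p => .prob (.var p)
  | ineq p d c => .probIneq (.var p) d c
  | neg φ => .neg (toFP φ)
  | delta φ => .delta (toFP φ)
  | conj φ χ => .conj (toFP φ) (toFP χ)
  | disj φ χ => .disj (toFP φ) (toFP χ)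
  | impl φ χ => .impl (toFP φ) (toFP χ)

end Luk

namespace FP

/-- The outer counterpart `α^↑` of an `L^Q_Pr`-formula, replacing each atom `Pr(φ)`
by the fresh variable `e φ` (and `Pr(φ)◇c̄` by `(e φ)◇c̄`). -/
def outer (e : CPL → ℕ) : FP → Luk
  | prob φ => .var (e φ)
  | probIneq φ d c => .ineq (e φ) d c
  | neg α => .neg (outer e α)
  | delta α => .delta (outer e α)
  | conj α β => .conj (outer e α) (outer e β)
  | disj α β => .disj (outer e α) (outer e β)
  | impl α β => .impl (outer e α) (outer e β)

end FP

/-- The ⊙-conjunction of a (nonempty) list of `L^Q_Pr`-formulas. -/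
def bigConjFP : List FP → FP
  | [] => .probIneq (.var 0) .ge 0
  | a :: t => t.foldl .conj a

/-- The ∨-disjunction of a (nonempty) list of classical formulas. -/
def bigDisjCPL : List CPL → CPL
  | [] => .var 0
  | a :: t => t.foldl .or a

/-- The PIT `⊙_i Pr(τ_i)≤c̄_i ⊙ ⊙_i Pr(τ_i)≥c̄_i` associated with the list of
pairs `(τ_i, c_i)`. -/
def completePITFormula (L : List (CPL × ℚ)) : FP :=
  bigConjFP (L.map (fun t => FP.probIneq t.1 .le t.2) ++
             L.map (fun t => FP.probIneq t.1 .ge t.2))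

/-- `τ` is an `L_CPL`-term containing, for every `p ∈ V`, exactly one of the
literals `p` and `¬p` (and no other variables). -/
def IsCompleteTermOver (V : Finset ℕ) (τ : CPL) : Prop :=
  CPL.IsTerm τ ∧ τ.vars ⊆ V ∧ ∀ p ∈ V, (p ∈ τ.posVars ↔ p ∉ τ.negVars)

/-- Membership in `𝒱 = {0, 1/n, …, (n−1)/n, 1}`. -/
def memVSet (n : ℕ) (c : ℚ) : Prop := ∃ k : ℕ, k ≤ n ∧ c = (k : ℚ) / (n : ℚ)

/-- The data `(τ_i, c_i)` of a `⟨V,𝒱⟩`-complete PIT (with `𝒱` given by `n`). -/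
def IsCompletePIT (V : Finset ℕ) (n : ℕ) (L : List (CPL × ℚ)) : Prop :=
  (L.map Prod.fst).Nodup ∧
  (∀ t ∈ L, IsCompleteTermOver V t.1 ∧ memVSet n t.2) ∧
  (L.map Prod.snd).sum = 1

/-- A measure is coherent with a value assignment `pr` on the events `E`. -/
def coherent {V : Finset ℕ} (M : ProbModel V) (E : Finset CPL) (pr : CPL → ℚ) : Prop :=
  ∀ ψ ∈ E, M.μ (truthSet V ψ) = (pr ψ : ℝ)

/-- Conditional probability `Pr_μ(φ | χ) = μ(‖φ∧χ‖)/μ(‖χ‖)`. -/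
noncomputable def condProb {V : Finset ℕ} (M : ProbModel V) (φ χ : CPL) : ℝ :=
  M.μ (truthSet V (CPL.and φ χ)) / M.μ (truthSet V χ)

/-- `τ` is a solution to the PrAP `⟨{φ}, χ, H, E, pr⟩`: an `L_CPL`-term composed of
literals from `H` s.t. `φ, τ ⊨_CPL χ` and some probabilistic model coherent with `pr`
gives `μ(‖φ∧τ‖) > 0`. -/
def IsPrAPSolution (φ χ : CPL) (H E : Finset CPL) (pr : CPL → ℚ) (τ : CPL) : Prop :=
  CPL.IsTerm τ ∧ τ.lits ⊆ H ∧
  (∀ v, CPL.eval v φ = true → CPL.eval v τ = true → CPL.eval v χ = true) ∧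
  ∃ M : ProbModel (φ.vars ∪ χ.vars),
    coherent M E pr ∧ 0 < M.μ (truthSet (φ.vars ∪ χ.vars) (CPL.and φ τ))

/-- `τ` is a preferred solution: a solution s.t. for every other solution `σ` there is
a probabilistic model coherent with `pr` with `μ(‖τ‖) ≥ μ(‖σ‖)`. -/
def IsPreferredPrAPSolution (φ χ : CPL) (H E : Finset CPL) (pr : CPL → ℚ) (τ : CPL) : Prop :=
  IsPrAPSolution φ χ H E pr τ ∧
  ∀ σ, IsPrAPSolution φ χ H E pr σ → σ ≠ τ →
    ∃ M : ProbModel (φ.vars ∪ χ.vars),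
      coherent M E pr ∧
      M.μ (truthSet (φ.vars ∪ χ.vars) σ) ≤ M.μ (truthSet (φ.vars ∪ χ.vars) τ)

/-- The FP-counterpart `Ξ_p = {Pr(ψ)≈c̄ : ψ ∈ E, p(ψ) = c}` of a value assignment,
where `Pr(ψ)≈c̄` abbreviates `(Pr(ψ)≥c̄) ⊙ (Pr(ψ)≤c̄)`. -/
def XiP (E : Finset CPL) (pr : CPL → ℚ) : Finset FP :=
  E.image (fun ψ => FP.conj (FP.probIneq ψ .ge (pr ψ)) (FP.probIneq ψ .le (pr ψ)))

/-- The next weakest PIL `λ^♭_𝒱` of the PIL `Pr(τ)◇(k/n)`. -/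
def flatPIL (n : ℕ) (τ : CPL) (d : Ineq) (k : ℕ) : FP :=
  match d with
  | .ge => FP.probIneq τ .gt (((k : ℚ) - 1) / (n : ℚ))
  | .gt => FP.probIneq τ .ge ((k : ℚ) / (n : ℚ))
  | .le => FP.probIneq τ .lt (((k : ℚ) + 1) / (n : ℚ))
  | .lt => FP.probIneq τ .le ((k : ℚ) / (n : ℚ))

/-- The theory `Ψ_Γ = Γ^↑ ∪ {p_φ → p_χ : φ, χ ∈ E[Γ], φ ⊨_CPL χ}`. -/
def PsiGamma (Γ : Finset FP) (e : CPL → ℕ) : Set Luk :=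
  (fun α => FP.outer e α) '' (↑Γ : Set FP) ∪
  {ψ | ∃ φ ∈ Γ.sup FP.events, ∃ χ ∈ Γ.sup FP.events,
        CPL.Entails φ χ ∧ ψ = Luk.impl (.var (e φ)) (.var (e χ))}

/-- The conjunction `hd ∧ ⋀_{q ∈ s} q`. -/
def conjVarsFrom (hd : CPL) (s : Finset ℕ) : CPL :=
  (s.sort (· ≤ ·)).foldl (fun acc q => CPL.and acc (CPL.var q)) hd

/-! The satisfying models of `ζ_φ` are exactly those giving every disjunct of `φ` probability
`0`. If `φ` is valid its disjuncts cover all worlds, so by subadditivity they cannot all be null.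
Otherwise a falsifying valuation gives a world in none of their truth sets, and the Dirac measure
at that world is such a model. -/

namespace CPL

lemma eval_congr {v w : ℕ → Bool} :
    ∀ φ : CPL, (∀ p ∈ φ.vars, v p = w p) → eval v φ = eval w φ
  | var p, h => h p (by simp [vars])
  | neg φ, h => by simp only [eval, eval_congr φ (by simpa [vars] using h)]
  | and φ χ, h | or φ χ, h => by
      simp only [vars, Finset.mem_union] at h
      simp only [eval, eval_congr φ fun p hp => h p (.inl hp),
        eval_congr χ fun p hp => h p (.inr hp)]

lemma evalSet_filter {V : Finset ℕ} {φ : CPL} (hφ : φ.vars ⊆ V) (v : ℕ → Bool) :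
    evalSet (V.filter fun p => v p) φ = eval v φ :=
  eval_congr φ fun p hp => by cases h : v p <;> simp [h, hφ hp]

lemma eval_foldl_or (v : ℕ → Bool) :
    ∀ (l : List CPL) (φ : CPL), eval v (l.foldl or φ) = (eval v φ || l.any (eval v))
  | [], φ => by simp
  | χ :: l, φ => by
      simp only [List.foldl_cons, eval_foldl_or v l, eval, List.any_cons, Bool.or_assoc]

lemma eval_bigDisjCPL {L : List CPL} (hL : L ≠ []) (v : ℕ → Bool) :
    eval v (bigDisjCPL L) = true ↔ ∃ τ ∈ L, eval v τ = true := by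
  obtain ⟨φ, l, rfl⟩ := List.exists_cons_of_ne_nil hL
  simp [bigDisjCPL, eval_foldl_or]

end CPL

namespace ProbModel

variable {V : Finset ℕ} (M : ProbModel V)

lemma mono {A B : Set (World V)} (h : A ⊆ B) : M.μ A ≤ M.μ B := by
  have := M.m_add A (B \ A) Set.disjoint_sdiff_right
  rw [Set.union_sdiff_cancel h] at this
  linarith [M.nonneg (B \ A)]

lemma union_le (A B : Set (World V)) : M.μ (A ∪ B) ≤ M.μ A + M.μ B := by
  rw [← Set.union_sdiff_self, M.m_add A (B \ A) Set.disjoint_sdiff_right]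
  linarith [M.mono (Set.sdiff_subset (s := B) (t := A))]

lemma biUnion_le_sum {ι : Type*} (A : ι → Set (World V)) :
    ∀ l : List ι, M.μ (⋃ i ∈ l, A i) ≤ (l.map fun i => M.μ (A i)).sum
  | [] => by simp [M.m_empty]
  | i :: l => by
      simp only [List.mem_cons, Set.iUnion_iUnion_eq_or_left, List.map_cons, List.sum_cons]
      linarith [M.union_le (A i) (⋃ j ∈ l, A j), biUnion_le_sum A l]

end ProbModel

noncomputable def ProbModel.dirac {V : Finset ℕ} (w : World V) : ProbModel V where
  μ A := if w ∈ A then 1 else 0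
  nonneg A := by split <;> norm_num
  le_one A := by split <;> norm_num
  m_univ := if_pos (Set.mem_univ w)
  m_empty := if_neg (Set.notMem_empty w)
  m_add A B hAB := by
    by_cases hA : w ∈ A
    · simp [hA, Set.disjoint_left.mp hAB hA]
    · by_cases hB : w ∈ B <;> simp [hA, hB]

lemma truthSet_eq_univ_of_valid {V : Finset ℕ} {φ : CPL} (hφ : CPL.Valid φ) :
    truthSet V φ = Set.univ :=
  Set.eq_univ_of_forall fun _ => hφ _

lemma truthSet_bigDisjCPL {L : List CPL} (hL : L ≠ []) (V : Finset ℕ) :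
    truthSet V (bigDisjCPL L) = ⋃ τ ∈ L, truthSet V τ := by
  ext w
  simp [truthSet, CPL.evalSet, CPL.eval_bigDisjCPL hL]

namespace FP

variable {V : Finset ℕ} (M : ProbModel V)

lemma interp_mem_Icc : ∀ α : FP, interp M α ∈ Set.Icc 0 1
  | prob _ => ⟨M.nonneg _, M.le_one _⟩
  | probIneq .. | delta _ => by unfold interp; split <;> norm_num
  | neg α => by
      have := interp_mem_Icc α
      simp only [interp, Set.mem_Icc] at this ⊢
      constructor <;> linarith
  | conj α β => by
      have := interp_mem_Icc α; have := interp_mem_Icc β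
      simp only [interp, Set.mem_Icc] at *
      exact ⟨le_max_left _ _, max_le zero_le_one (by linarith)⟩
  | disj α β | impl α β => by
      have := interp_mem_Icc α; have := interp_mem_Icc β
      simp only [interp, Set.mem_Icc] at *
      exact ⟨le_min zero_le_one (by linarith), min_le_left _ _⟩

lemma interp_conj_eq_one (α β : FP) :
    interp M (conj α β) = 1 ↔ interp M α = 1 ∧ interp M β = 1 := by
  have hα := (interp_mem_Icc M α).2
  have hβ := (interp_mem_Icc M β).2
  simp only [interp]
  constructor
  · intro h
    have : interp M α + interp M β - 1 = 1 := by
      rcases max_choice 0 (interp M α + interp M β - 1) with h' | h' <;> rw [h'] at h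
      · norm_num at h
      · exact h
    constructor <;> linarith
  · rintro ⟨h₁, h₂⟩
    norm_num [h₁, h₂]

lemma interp_foldl_conj_eq_one :
    ∀ (l : List FP) (α : FP),
      interp M (l.foldl conj α) = 1 ↔ ∀ β ∈ α :: l, interp M β = 1
  | [], α => by simp
  | β :: l, α => by
      simp [interp_foldl_conj_eq_one l, interp_conj_eq_one, and_assoc]

lemma interp_bigConjFP_eq_one {L : List FP} (hL : L ≠ []) :
    interp M (bigConjFP L) = 1 ↔ ∀ α ∈ L, interp M α = 1 := by
  obtain ⟨α, l, rfl⟩ := List.exists_cons_of_ne_nil hL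
  exact interp_foldl_conj_eq_one M l α

lemma interp_probIneq_le_zero (φ : CPL) :
    interp M (probIneq φ .le 0) = 1 ↔ M.μ (truthSet V φ) = 0 := by
  have := M.nonneg (truthSet V φ)
  by_cases h : M.μ (truthSet V φ) ≤ 0
  · simp [interp, Ineq.holds, le_antisymm h this]
  · simp [interp, Ineq.holds, h, (lt_of_not_ge h).ne']

lemma vars_subset_foldl_conj :
    ∀ (l : List FP) (α β : FP), β ∈ α :: l → β.vars ⊆ (l.foldl conj α).vars
  | [], _, _, h => by simp_all
  | γ :: l, α, β, h => by
      have ih := vars_subset_foldl_conj l (conj α γ)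
      rcases List.mem_cons.mp h with rfl | h
      · exact subset_trans (by simp [vars]) (ih _ List.mem_cons_self)
      rcases List.mem_cons.mp h with rfl | h
      · exact subset_trans (by simp [vars]) (ih _ List.mem_cons_self)
      · exact ih β (List.mem_cons_of_mem _ h)

lemma vars_subset_bigConjFP {L : List FP} {α : FP} (hα : α ∈ L) :
    α.vars ⊆ (bigConjFP L).vars := by
  obtain ⟨β, l, rfl⟩ := List.exists_cons_of_ne_nil (List.ne_nil_of_mem hα)
  exact vars_subset_foldl_conj l β α hα

end FP

theorem stmt9_general (L : List CPL) (hL : L ≠ []) :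
    FP.Satisfiable (bigConjFP (L.map (fun τ => FP.probIneq τ .le 0))) ↔
      ¬ CPL.Valid (bigDisjCPL L) := by
  set ζ := bigConjFP (L.map (fun τ => FP.probIneq τ .le 0))
  have hvars : ∀ τ ∈ L, τ.vars ⊆ ζ.vars := fun τ hτ =>
    FP.vars_subset_bigConjFP (List.mem_map_of_mem (f := fun τ => FP.probIneq τ .le 0) hτ)
  have hsat : ∀ M : ProbModel ζ.vars,
      FP.interp M ζ = 1 ↔ ∀ τ ∈ L, M.μ (truthSet ζ.vars τ) = 0 := fun M => by
    rw [FP.interp_bigConjFP_eq_one M (by simpa using hL), List.forall_mem_map]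
    simp only [FP.interp_probIneq_le_zero]
  constructor
  · rintro ⟨M, hM⟩ hvalid
    have hcover := M.biUnion_le_sum (truthSet ζ.vars) L
    rw [← truthSet_bigDisjCPL hL, truthSet_eq_univ_of_valid hvalid, M.m_univ,
      List.map_congr_left ((hsat M).1 hM)] at hcover
    norm_num at hcover
  · intro hinvalid
    obtain ⟨v, hv⟩ := not_forall.mp hinvalid
    refine ⟨ProbModel.dirac ⟨_, Finset.filter_subset (fun p => v p) ζ.vars⟩,
      (hsat _).2 fun τ hτ => if_neg fun hw => hv ?_⟩
    replace hw : CPL.evalSet _ τ = true := hw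
    rw [CPL.evalSet_filter (hvars τ hτ)] at hw
    exact (CPL.eval_bigDisjCPL hL v).2 ⟨τ, hτ, hw⟩

/-- For `φ = ⋁_i ⋀_j l^i_j` in DNF, the PIT
`ζ_φ = ⊙_i (Pr(⋀_j l^i_j) ≤ 0̄)` is FP-satisfiable iff `φ` is not CPL-valid. -/
theorem stmt9 (L : List CPL) (hL : L ≠ []) (hterm : ∀ τ ∈ L, CPL.IsTerm τ) :
    FP.Satisfiable (bigConjFP (L.map (fun τ => FP.probIneq τ .le 0))) ↔
      ¬ CPL.Valid (bigDisjCPL L) :=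
  stmt9_general L hL
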